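/- Let d be a positive integer, α ∈ (0,2), s ∈ [0,d], and let β > 0 satisfy β > α/(d − s + α), i.e. 1/β + s/α < (d+α)/α. Let μ be a nonzero finite Borel measure on ℝ^d with compact support S satisfying condition (F2)-s with constant C̲, and let k > 0. Then: (i) for every x ∈ S, h_k(t,x) → ∞ as t ↓ 0; and (ii) for every ρ > 0, sup{ h_k(t,x) : x ∈ ℝ^d, d(x,S) ≥ ρ } → 0 as t ↓ 0. -/

import Mathlib

/-! Near a point `x` of the support, `W ≥ 1/2` on the ball of radius `t^{1/α}` around `x`, which
carries mass at least `C t^{s/α}` by (F2); hence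
`h_k(t,x) ≳ t^{-1/β}(1 + t^{-s/α}) t^{s/α} ≥ t^{-1/β} → ∞`. Away from the support only the tail
of `W` matters, and `W(r) ≤ C_δ r^{δ-(d+α)}` for `r ≥ 1` since the logarithm costs only `r^δ`.
This gives `h_k(t,x) ≲ t^{-1/β-s/α} t^{(d+α-δ)/α}`, a positive power of `t` as soon as `δ` fits
into the slack of `1/β + s/α < (d+α)/α`. -/

open MeasureTheory Metric Set Filter Topology

/-- The profile function `W(r) = log(e + r²)/(1 + r^{d+α})`. -/
noncomputable def Wfn (d : ℕ) (α r : ℝ) : ℝ :=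
  Real.log (Real.exp 1 + r ^ 2) / (1 + r ^ ((d : ℝ) + α))

/-- `w_t(x) = t^{-1/β}(1 + t^{-s/α}) W(t^{-1/α}|x|)`. -/
noncomputable def wfn (d : ℕ) (α β s t : ℝ) (x : EuclideanSpace ℝ (Fin d)) : ℝ :=
  t ^ (-(1:ℝ)/β) * (1 + t ^ (-s/α)) * Wfn d α (t ^ (-(1:ℝ)/α) * ‖x‖)

/-- `h_k(t,x) = k ∫ w_t(x - y) dμ(y)`. -/
noncomputable def hfn (d : ℕ) (α β s : ℝ) (μ : Measure (EuclideanSpace ℝ (Fin d)))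
    (k t : ℝ) (x : EuclideanSpace ℝ (Fin d)) : ℝ :=
  k * ∫ y, wfn d α β s t (x - y) ∂μ

/-- `S` is the closed support of `μ`. -/
def IsSupportOf (d : ℕ) (μ : Measure (EuclideanSpace ℝ (Fin d)))
    (S : Set (EuclideanSpace ℝ (Fin d))) : Prop :=
  IsClosed S ∧ μ Sᶜ = 0 ∧ ∀ x ∈ S, ∀ r : ℝ, 0 < r → 0 < μ (ball x r)

/-- Condition (F2)-s with constant `Cund` on the set `S`. -/
def IsF2 (d : ℕ) (μ : Measure (EuclideanSpace ℝ (Fin d)))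
    (S : Set (EuclideanSpace ℝ (Fin d))) (Cund s : ℝ) : Prop :=
  ∀ x ∈ S, ∀ r : ℝ, 0 < r → r ≤ 1 →
    ENNReal.ofReal (Cund * r ^ s) ≤ μ (closedBall x r)

open Real

lemma exp_one_add_one_le_exp_two : exp 1 + 1 ≤ exp 2 := by
  have : exp 2 = exp 1 * exp 1 := by rw [← exp_add]; norm_num
  nlinarith [exp_one_gt_two]

lemma one_le_log_exp_one_add_sq (r : ℝ) : 1 ≤ log (exp 1 + r ^ 2) := by
  have := log_le_log (exp_pos 1) (le_add_of_nonneg_right (sq_nonneg r))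
  rwa [log_exp] at this

lemma log_exp_one_add_sq_le {δ r : ℝ} (hδ : 0 < δ) (hr : 0 ≤ r) :
    log (exp 1 + r ^ 2) ≤ 2 + 2 / δ * r ^ δ := by
  have hrδ : 0 ≤ 2 / δ * r ^ δ := by positivity
  rcases le_or_gt r 1 with hr1 | hr1
  · have : exp 1 + r ^ 2 ≤ exp 2 := by nlinarith [exp_one_add_one_le_exp_two]
    linarith [(log_le_log (by positivity) this).trans_eq (log_exp 2)]
  · have hsq : exp 1 + r ^ 2 ≤ exp 2 * r ^ 2 := by
      have hr2 : 1 ≤ r ^ 2 := one_le_pow₀ hr1.le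
      calc exp 1 + r ^ 2 ≤ (exp 1 + 1) * r ^ 2 := by nlinarith [exp_pos 1]
        _ ≤ exp 2 * r ^ 2 := by gcongr; exact exp_one_add_one_le_exp_two
    calc log (exp 1 + r ^ 2) ≤ log (exp 2 * r ^ 2) := log_le_log (by positivity) hsq
      _ = 2 + 2 * log r := by
        rw [log_mul (exp_pos 2).ne' (by positivity), log_exp, log_pow]; push_cast; ring
      _ ≤ 2 + 2 / δ * r ^ δ := by
        have := log_le_rpow_div hr hδ
        rw [div_mul_eq_mul_div, mul_div_assoc]; linarith

section Profile

variable {d : ℕ} {α r : ℝ}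

lemma Wfn_nonneg (hr : 0 ≤ r) : 0 ≤ Wfn d α r :=
  div_nonneg (zero_le_one.trans (one_le_log_exp_one_add_sq r)) (by positivity)

lemma Wfn_le (hp : 0 < (d : ℝ) + α) (hr : 0 ≤ r) : Wfn d α r ≤ 2 + 2 / ((d : ℝ) + α) := by
  have hlog := log_exp_one_add_sq_le hp hr
  have hrp : 0 ≤ r ^ ((d : ℝ) + α) := rpow_nonneg hr _
  rw [Wfn, div_le_iff₀ (by positivity)]
  nlinarith [div_pos two_pos hp]

lemma half_le_Wfn (hp : 0 ≤ (d : ℝ) + α) (hr0 : 0 ≤ r) (hr1 : r ≤ 1) : 1 / 2 ≤ Wfn d α r := by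
  have := rpow_le_one hr0 hr1 hp
  rw [Wfn, le_div_iff₀ (by positivity)]
  linarith [one_le_log_exp_one_add_sq r]

lemma Wfn_le_mul_rpow {δ : ℝ} (hδ : 0 < δ) (hr : 1 ≤ r) :
    Wfn d α r ≤ (2 + 2 / δ) * r ^ (δ - ((d : ℝ) + α)) := by
  have hr0 : 0 < r := one_pos.trans_le hr
  have hpow : 0 < r ^ ((d : ℝ) + α) := rpow_pos_of_pos hr0 _
  have hrδ : 1 ≤ r ^ δ := one_le_rpow hr hδ.le
  calc Wfn d α r ≤ log (exp 1 + r ^ 2) / r ^ ((d : ℝ) + α) :=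
        div_le_div_of_nonneg_left (zero_le_one.trans (one_le_log_exp_one_add_sq r)) hpow
          (by linarith)
    _ ≤ (2 + 2 / δ) * r ^ δ / r ^ ((d : ℝ) + α) := by
        gcongr
        have := log_exp_one_add_sq_le hδ hr0.le
        nlinarith [div_pos two_pos hδ]
    _ = (2 + 2 / δ) * r ^ (δ - ((d : ℝ) + α)) := by rw [rpow_sub hr0]; ring

lemma Continuous.Wfn {X : Type*} [TopologicalSpace X] {f : X → ℝ} (hf : Continuous f)
    (hf0 : ∀ x, 0 ≤ f x) (hp : 0 ≤ (d : ℝ) + α) : Continuous fun x => Wfn d α (f x) := by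
  refine .div ((continuous_const.add (hf.pow 2)).log fun x => ?_)
    (continuous_const.add (hf.rpow_const fun _ => Or.inr hp)) fun x => ?_
  · exact (add_pos_of_pos_of_nonneg (exp_pos 1) (sq_nonneg _)).ne'
  · have := rpow_nonneg (hf0 x) ((d : ℝ) + α)
    positivity

end Profile

section Kernel

variable {d : ℕ} {α β s t : ℝ}

lemma wfn_nonneg (ht : 0 ≤ t) (z : EuclideanSpace ℝ (Fin d)) : 0 ≤ wfn d α β s t z := by
  have := Wfn_nonneg (d := d) (α := α) (by positivity : 0 ≤ t ^ (-(1:ℝ)/α) * ‖z‖)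
  unfold wfn; positivity

lemma continuous_wfn (ht : 0 ≤ t) (hp : 0 ≤ (d : ℝ) + α) : Continuous (wfn d α β s t) :=
  continuous_const.mul ((continuous_const.mul continuous_norm).Wfn
    (fun z => mul_nonneg (rpow_nonneg ht _) (norm_nonneg z)) hp)

lemma wfn_le (ht : 0 ≤ t) (hp : 0 < (d : ℝ) + α) (z : EuclideanSpace ℝ (Fin d)) :
    wfn d α β s t z ≤ t ^ (-(1:ℝ)/β) * (1 + t ^ (-s/α)) * (2 + 2 / ((d : ℝ) + α)) :=
  mul_le_mul_of_nonneg_left (Wfn_le hp (by positivity)) (by positivity)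

lemma integrable_wfn_sub {μ : Measure (EuclideanSpace ℝ (Fin d))} [IsFiniteMeasure μ]
    (ht : 0 ≤ t) (hp : 0 < (d : ℝ) + α) (x : EuclideanSpace ℝ (Fin d)) :
    Integrable (fun y => wfn d α β s t (x - y)) μ :=
  .of_bound
    ((continuous_wfn ht hp.le).comp (continuous_const.sub continuous_id)).aestronglyMeasurable _
    (ae_of_all _ fun _ => (norm_of_nonneg (wfn_nonneg ht _)).trans_le (wfn_le ht hp _))

lemma half_le_wfn (ht : 0 < t) (hp : 0 ≤ (d : ℝ) + α) {z : EuclideanSpace ℝ (Fin d)}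
    (hz : ‖z‖ ≤ t ^ (1 / α)) : t ^ (-(1:ℝ)/β) * (1 + t ^ (-s/α)) / 2 ≤ wfn d α β s t z := by
  have harg : t ^ (-(1:ℝ)/α) * ‖z‖ ≤ 1 :=
    calc t ^ (-(1:ℝ)/α) * ‖z‖ ≤ t ^ (-(1:ℝ)/α) * t ^ (1 / α) := by gcongr
      _ = 1 := by rw [← rpow_add ht, neg_div, neg_add_cancel, rpow_zero]
  have := half_le_Wfn (d := d) hp (by positivity) harg
  rw [wfn, div_eq_mul_one_div _ (2 : ℝ)]
  gcongr

lemma wfn_le_of_le_norm {δ ρ : ℝ} (hα : 0 ≤ α) (hs : 0 ≤ s) (hδ : 0 < δ)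
    (hδp : δ ≤ (d : ℝ) + α) (ht0 : 0 < t) (ht1 : t ≤ 1) (htρ : t ^ (1 / α) ≤ ρ)
    {z : EuclideanSpace ℝ (Fin d)} (hz : ρ ≤ ‖z‖) :
    wfn d α β s t z ≤
      2 * (2 + 2 / δ) * ρ ^ (δ - ((d : ℝ) + α)) * t ^ (((d : ℝ) + α - δ - s) / α - 1 / β) := by
  set p : ℝ := (d : ℝ) + α
  set c := t ^ (-(1:ℝ)/α) with hc
  have hρ : 0 < ρ := (rpow_pos_of_pos ht0 _).trans_le htρ
  have hcρ : 1 ≤ c * ρ := by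
    rw [hc, neg_div, rpow_neg ht0.le, inv_mul_eq_div, one_le_div (by positivity)]
    exact htρ
  have hW : Wfn d α (c * ‖z‖) ≤ (2 + 2 / δ) * (t ^ ((p - δ) / α) * ρ ^ (δ - p)) :=
    calc Wfn d α (c * ‖z‖) ≤ (2 + 2 / δ) * (c * ‖z‖) ^ (δ - p) :=
          Wfn_le_mul_rpow hδ (hcρ.trans (by gcongr))
      _ ≤ (2 + 2 / δ) * (c * ρ) ^ (δ - p) := by
          have hexp : δ - p ≤ 0 := by linarith
          exact mul_le_mul_of_nonneg_left
            (rpow_le_rpow_of_nonpos (one_pos.trans_le hcρ) (by gcongr) hexp) (by positivity)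
      _ = (2 + 2 / δ) * (t ^ ((p - δ) / α) * ρ ^ (δ - p)) := by
          rw [mul_rpow (by positivity) hρ.le, hc, ← rpow_mul ht0.le]
          congr 3; ring
  have hA : t ^ (-(1:ℝ)/β) * (1 + t ^ (-s/α)) ≤ 2 * (t ^ (-(1:ℝ)/β) * t ^ (-s/α)) := by
    have : 1 ≤ t ^ (-s/α) := one_le_rpow_of_pos_of_le_one_of_nonpos ht0 ht1
      (div_nonpos_of_nonpos_of_nonneg (neg_nonpos.mpr hs) hα)
    have : 0 < t ^ (-(1:ℝ)/β) := rpow_pos_of_pos ht0 _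
    nlinarith
  calc wfn d α β s t z
      ≤ 2 * (t ^ (-(1:ℝ)/β) * t ^ (-s/α)) * ((2 + 2 / δ) * (t ^ ((p - δ) / α) * ρ ^ (δ - p))) :=
        mul_le_mul hA hW (Wfn_nonneg (by positivity)) (by positivity)
    _ = 2 * (2 + 2 / δ) * ρ ^ (δ - p) * (t ^ (-(1:ℝ)/β) * t ^ (-s/α) * t ^ ((p - δ) / α)) := by
        ring
    _ = 2 * (2 + 2 / δ) * ρ ^ (δ - p) * t ^ ((p - δ - s) / α - 1 / β) := by
        rw [← rpow_add ht0, ← rpow_add ht0]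
        congr 2; ring

end Kernel

lemma tendsto_rpow_nhdsGT_zero_nhds_zero {y : ℝ} (hy : 0 < y) :
    Tendsto (fun x : ℝ => x ^ y) (𝓝[>] 0) (𝓝 0) := by
  have := (continuousAt_rpow_const 0 y (.inr hy.le)).tendsto.mono_left
    (nhdsWithin_le_nhds (s := Ioi 0))
  rwa [zero_rpow hy.ne'] at this

section Integral

variable {d : ℕ} {α β s t : ℝ} {μ : Measure (EuclideanSpace ℝ (Fin d))} [IsFiniteMeasure μ]
  {x : EuclideanSpace ℝ (Fin d)}

lemma mul_rpow_le_integral_wfn_sub {C : ℝ} (hC : 0 ≤ C) (hp : 0 < (d : ℝ) + α) (ht : 0 < t)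
    (hball : ENNReal.ofReal (C * (t ^ (1 / α)) ^ s) ≤ μ (closedBall x (t ^ (1 / α)))) :
    C / 2 * t ^ (-(1:ℝ)/β) ≤ ∫ y, wfn d α β s t (x - y) ∂μ := by
  set r := t ^ (1 / α)
  set A := t ^ (-(1:ℝ)/β) * (1 + t ^ (-s/α))
  have hmass : C * r ^ s ≤ μ.real (closedBall x r) :=
    (ENNReal.ofReal_le_iff_le_toReal (measure_ne_top μ _)).mp hball
  have hA : t ^ (-(1:ℝ)/β) ≤ A * r ^ s := by
    have hcancel : t ^ (-s/α) * r ^ s = 1 := by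
      rw [← rpow_mul ht.le, ← rpow_add ht]; ring_nf; exact rpow_zero t
    have : 0 ≤ t ^ (-(1:ℝ)/β) * r ^ s := by positivity
    linear_combination this - t ^ (-(1:ℝ)/β) * hcancel
  have hint := integrable_wfn_sub (μ := μ) (β := β) (s := s) ht.le hp x
  calc C / 2 * t ^ (-(1:ℝ)/β) ≤ A / 2 * μ.real (closedBall x r) := by
        have : 0 ≤ A := by positivity
        nlinarith
    _ ≤ ∫ y in closedBall x r, wfn d α β s t (x - y) ∂μ :=
        setIntegral_ge_of_const_le_real measurableSet_closedBall (measure_ne_top μ _)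
          (fun y hy => half_le_wfn ht hp.le (by rw [← dist_eq_norm]; exact mem_closedBall'.mp hy))
          hint.integrableOn
    _ ≤ ∫ y, wfn d α β s t (x - y) ∂μ :=
        setIntegral_le_integral hint (ae_of_all _ fun _ => wfn_nonneg ht.le _)

lemma integral_wfn_sub_le {S : Set (EuclideanSpace ℝ (Fin d))} (hS : μ Sᶜ = 0) {ρ B : ℝ}
    (ht : 0 ≤ t) (hx : ρ ≤ infDist x S) (hB : ∀ z, ρ ≤ ‖z‖ → wfn d α β s t z ≤ B) :
    ∫ y, wfn d α β s t (x - y) ∂μ ≤ B * μ.real univ := by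
  refine (le_norm_self _).trans (norm_integral_le_of_norm_le_const ?_)
  filter_upwards [mem_ae_iff.mpr hS] with y hy
  rw [norm_of_nonneg (wfn_nonneg ht _)]
  exact hB _ (hx.trans ((infDist_le_dist_of_mem hy).trans_eq (dist_eq_norm x y)))

end Integral

section Limits

variable {d : ℕ} {α β s : ℝ} {μ : Measure (EuclideanSpace ℝ (Fin d))} [IsFiniteMeasure μ]
  {S : Set (EuclideanSpace ℝ (Fin d))} {k : ℝ}

lemma pos_and_add_div_lt_of_div_lt (hα : 0 < α) (hsd : s ≤ d) (hβ : α / ((d : ℝ) - s + α) < β) :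
    0 < β ∧ s + α / β < (d : ℝ) + α := by
  have hD : 0 < (d : ℝ) - s + α := by linarith
  have hβ0 : 0 < β := (div_pos hα hD).trans hβ
  exact ⟨hβ0, by linarith [(div_lt_comm₀ hD hβ0).mp hβ]⟩

theorem tendsto_hfn_atTop (hα : 0 < α) (hβ : 0 < β) {C : ℝ} (hC : 0 < C)
    (hF2 : IsF2 d μ S C s) (hk : 0 < k) {x : EuclideanSpace ℝ (Fin d)} (hx : x ∈ S) :
    Tendsto (fun t => hfn d α β s μ k t x) (𝓝[>] 0) atTop := by
  have hlim : Tendsto (fun t : ℝ => k * (C / 2 * t ^ (-(1:ℝ)/β))) (𝓝[>] 0) atTop :=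
    ((tendsto_rpow_neg_nhdsGT_zero (div_neg_of_neg_of_pos (by norm_num) hβ)).const_mul_atTop
      (by positivity)).const_mul_atTop hk
  refine tendsto_atTop_mono' _ ?_ hlim
  filter_upwards [Ioc_mem_nhdsGT one_pos] with t ⟨ht0, ht1⟩
  have hr0 : 0 < t ^ (1 / α) := rpow_pos_of_pos ht0 _
  have hr1 : t ^ (1 / α) ≤ 1 := rpow_le_one ht0.le ht1 (by positivity)
  exact mul_le_mul_of_nonneg_left
    (mul_rpow_le_integral_wfn_sub hC.le (by positivity) ht0 (hF2 x hx _ hr0 hr1)) hk.le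

theorem eventually_hfn_lt (hα : 0 < α) (hβ : 0 < β) (hs : 0 ≤ s) (hsβ : s + α / β < d + α)
    (hS : μ Sᶜ = 0) (hk : 0 ≤ k) {ρ : ℝ} (hρ : 0 < ρ) {ε : ℝ} (hε : 0 < ε) :
    ∀ᶠ t in 𝓝[>] 0, ∀ x, ρ ≤ infDist x S → hfn d α β s μ k t x < ε := by
  set p : ℝ := (d : ℝ) + α
  obtain ⟨δ, hδ, hδp, hθ⟩ : ∃ δ, 0 < δ ∧ δ ≤ p ∧ 0 < (p - δ - s) / α - 1 / β := by
    refine ⟨(p - s - α / β) / 2, by linarith, ?_, ?_⟩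
    · have : 0 ≤ α / β := by positivity
      linarith
    · have : (p - (p - s - α / β) / 2 - s) / α - 1 / β = (p - s - α / β) / 2 / α := by
        field_simp; ring
      rw [this]; exact div_pos (by linarith) hα
  set B : ℝ → ℝ := fun t => 2 * (2 + 2 / δ) * ρ ^ (δ - p) * t ^ ((p - δ - s) / α - 1 / β)
  have hB : Tendsto (fun t => k * (B t * μ.real univ)) (𝓝[>] 0) (𝓝 0) := by
    have := (((tendsto_rpow_nhdsGT_zero_nhds_zero hθ).const_mul
      (2 * (2 + 2 / δ) * ρ ^ (δ - p))).mul_const (μ.real univ)).const_mul k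
    simpa only [mul_zero, zero_mul] using this
  filter_upwards [hB.eventually (gt_mem_nhds hε),
    (tendsto_rpow_nhdsGT_zero_nhds_zero (one_div_pos.mpr hα)).eventually (gt_mem_nhds hρ),
    Ioo_mem_nhdsGT one_pos] with t hBt htρ ⟨ht0, ht1⟩ x hx
  have hint : ∫ y, wfn d α β s t (x - y) ∂μ ≤ B t * μ.real univ :=
    integral_wfn_sub_le hS ht0.le hx fun _ hz =>
      wfn_le_of_le_norm hα.le hs hδ hδp ht0 ht1.le htρ.le hz
  exact (mul_le_mul_of_nonneg_left hint hk).trans_lt hBt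

end Limits

theorem stmt_3_general (d : ℕ) (α β s : ℝ) (hα : α ∈ Ioo (0:ℝ) 2)
    (hs : s ∈ Icc (0:ℝ) (d:ℝ)) (hβ : α / ((d:ℝ) - s + α) < β)
    (μ : Measure (EuclideanSpace ℝ (Fin d))) [IsFiniteMeasure μ]
    (S : Set (EuclideanSpace ℝ (Fin d)))
    (hSsupp : IsSupportOf d μ S)
    (Cund : ℝ) (hCund : 0 < Cund) (hF2 : IsF2 d μ S Cund s)
    (k : ℝ) (hk : 0 < k) :
    (∀ x ∈ S, Tendsto (fun t => hfn d α β s μ k t x) (𝓝[>] (0:ℝ)) atTop) ∧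
    (∀ ρ > (0:ℝ), ∀ ε > (0:ℝ), ∀ᶠ t in 𝓝[>] (0:ℝ),
      ∀ x : EuclideanSpace ℝ (Fin d), ρ ≤ infDist x S → hfn d α β s μ k t x < ε) := by
  obtain ⟨hβ0, hsβ⟩ := pos_and_add_div_lt_of_div_lt hα.1 hs.2 hβ
  exact ⟨fun x hx => tendsto_hfn_atTop hα.1 hβ0 hCund hF2 hk hx,
    fun ρ hρ ε hε => eventually_hfn_lt hα.1 hβ0 hs.1 hsβ hSsupp.2.1 hk.le hρ hε⟩

/-- In the supercritical regime `β > α/(d-s+α)`: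
(i) `h_k(t,x) → ∞` as `t ↓ 0` for every `x` in the support `S`, and
(ii) `h_k(t,·)` vanishes uniformly on `{x : d(x,S) ≥ ρ}` as `t ↓ 0`, for every `ρ > 0`. -/
theorem stmt_3 (d : ℕ) (hd : 0 < d) (α β s : ℝ) (hα : α ∈ Ioo (0:ℝ) 2)
    (hs : s ∈ Icc (0:ℝ) (d:ℝ)) (hβ : α / ((d:ℝ) - s + α) < β)
    (μ : Measure (EuclideanSpace ℝ (Fin d))) [IsFiniteMeasure μ] (hμ : μ ≠ 0)
    (S : Set (EuclideanSpace ℝ (Fin d))) (hScpt : IsCompact S)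
    (hSsupp : IsSupportOf d μ S)
    (Cund : ℝ) (hCund : 0 < Cund) (hF2 : IsF2 d μ S Cund s)
    (k : ℝ) (hk : 0 < k) :
    (∀ x ∈ S, Tendsto (fun t => hfn d α β s μ k t x) (𝓝[>] (0:ℝ)) atTop) ∧
    (∀ ρ > (0:ℝ), ∀ ε > (0:ℝ), ∀ᶠ t in 𝓝[>] (0:ℝ),
      ∀ x : EuclideanSpace ℝ (Fin d), ρ ≤ infDist x S → hfn d α β s μ k t x < ε) :=
  stmt_3_general d α β s hα hs hβ μ S hSsupp Cund hCund hF2 k hk
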